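/- arXiv:0708.0170 — 7 statements merged into one kernel-verified Lean document; each statement's English description precedes it below -/
import Mathlib

section
/- Let R : ℝ → ℝ and R̃ : ℝ → ℝ be differentiable functions with R(t) > 0 and R̃(t) > 0 for all t ∈ ℝ, satisfying the mutual-synchronization identities R̃(t) = R(t − R̃(t)) and R(t) = R̃(t − R(t)) for all t ∈ ℝ. Then there is a constant R₀ > 0 such that R(t) = R₀ and R̃(t) = R₀ for all t ∈ ℝ. (Proposition 3 of the paper: two mutually Einstein-synchroneous clocks assign to each other one and the same constant radar distance.) -/
/-!
Put `q t = t - R t` and `q̃ s = s - R̃ s`. The identities say that `s ↦ s + R̃ s` is a left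
inverse of `q` (and symmetrically for `q̃`), so `q` and `q̃` are continuous injections lying
below the identity, hence strictly increasing. Their composite `φ t = q̃ (q t) = t - 2 R t` is
then monotone, and `R ∘ φ = R`. Iterating, `x ≤ y` gives `x - 2k R x ≤ y - 2k R y` for all `k`,
so `R` is antitone; with `R (t - 2 R t) = R t` this makes every `t` a local maximum of `R`,
whence `R' = 0` and `R` is constant.
-/

open Function

theorem Continuous.strictMono_of_injective_of_lt_self {α : Type*}
    [ConditionallyCompleteLinearOrder α] [TopologicalSpace α] [OrderTopology α]
    [DenselyOrdered α] {f : α → α} (hf : Continuous f) (hinj : Injective f)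
    (hlt : ∀ x, f x < x) : StrictMono f := by
  refine (hf.strictMono_of_inj hinj).resolve_right fun hanti => ?_
  obtain ⟨a⟩ : Nonempty α := inferInstance
  exact lt_asymm (hlt (f a)) (hanti (hlt a))

theorem strictMono_sub_of_apply_sub_eq {f g : ℝ → ℝ} (hf : Continuous f)
    (hpos : ∀ t, 0 < f t) (hfg : ∀ t, g (t - f t) = f t) :
    StrictMono fun t => t - f t := by
  have hleft : LeftInverse (fun s => s + g s) (fun t => t - f t) := fun t => by
    simp only [hfg]; ring
  exact (continuous_id.sub hf).strictMono_of_injective_of_lt_self hleft.injective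
    fun t => sub_lt_self t (hpos t)

section InvariantAlongOrbit

variable {g : ℝ → ℝ} (hinv : ∀ t, g (t - g t) = g t)
include hinv

theorem apply_sub_nat_mul_self (k : ℕ) (t : ℝ) : g (t - k * g t) = g t := by
  induction k with
  | zero => simp
  | succ k ih =>
    calc g (t - (k + 1 : ℕ) * g t) = g ((t - k * g t) - g (t - k * g t)) := by
          rw [ih]; push_cast; ring_nf
      _ = g t := by rw [hinv, ih]

theorem antitone_of_monotone_sub (hmono : Monotone fun t => t - g t) : Antitone g := by
  intro x y hxy
  have hiter : ∀ k : ℕ, x - k * g x ≤ y - k * g y := by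
    intro k
    induction k with
    | zero => simpa using hxy
    | succ k ih =>
      have := hmono ih
      simp only [apply_sub_nat_mul_self hinv] at this
      push_cast
      linarith
  by_contra! hlt
  obtain ⟨k, hk⟩ := exists_nat_gt ((y - x) / (g y - g x))
  rw [div_lt_iff₀ (sub_pos.mpr hlt)] at hk
  linarith [hiter k]

theorem isLocalMax_of_antitone {t : ℝ} (hpos : 0 < g t) (hanti : Antitone g) :
    IsLocalMax g t := by
  filter_upwards [Ioi_mem_nhds (sub_lt_self t hpos)] with s hs
  rcases le_total s t with hst | hts
  · rw [← hinv t]; exact hanti hs.le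
  · exact hanti hts

end InvariantAlongOrbit

theorem apply_eq_of_monotone_sub_of_apply_sub_self {g : ℝ → ℝ} (hg : Differentiable ℝ g)
    (hpos : ∀ t, 0 < g t) (hmono : Monotone fun t => t - g t)
    (hinv : ∀ t, g (t - g t) = g t) (x y : ℝ) : g x = g y :=
  is_const_of_deriv_eq_zero hg
    (fun t => (isLocalMax_of_antitone hinv (hpos t)
      (antitone_of_monotone_sub hinv hmono)).deriv_eq_zero) x y

/-- Proposition 3 of the paper: if each of two non-intersecting clocks is Einstein
synchroneous to the other, then the radar distances `R` and `R̃` they assign to each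
other are one and the same positive constant. Stated in purely real-analytic form. -/
theorem mutual_synchronization_constant_distance
    (R Rt : ℝ → ℝ)
    (hR : Differentiable ℝ R) (hRt : Differentiable ℝ Rt)
    (hRpos : ∀ t : ℝ, R t > 0) (hRtpos : ∀ t : ℝ, Rt t > 0)
    (hsync₁ : ∀ t : ℝ, Rt t = R (t - Rt t))
    (hsync₂ : ∀ t : ℝ, R t = Rt (t - R t)) :
    ∃ R₀ : ℝ, R₀ > 0 ∧ (∀ t : ℝ, R t = R₀) ∧ (∀ t : ℝ, Rt t = R₀) := by
  have hq := strictMono_sub_of_apply_sub_eq hR.continuous hRpos fun t => (hsync₂ t).symm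
  have hqt := strictMono_sub_of_apply_sub_eq hRt.continuous hRtpos fun t => (hsync₁ t).symm
  have hφ : ∀ t, (t - R t) - Rt (t - R t) = t - 2 * R t := fun t => by
    rw [← hsync₂]; ring
  have hmono : Monotone fun t => t - 2 * R t := by
    simpa only [comp_def, hφ] using hqt.monotone.comp hq.monotone
  have hinv : ∀ t, 2 * R (t - 2 * R t) = 2 * R t := fun t => by
    rw [← hφ, ← hsync₁, ← hsync₂]
  have hconst := apply_eq_of_monotone_sub_of_apply_sub_self (hR.const_mul 2)
    (fun t => by linarith [hRpos t]) hmono hinv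
  have hR₀ : ∀ t, R t = R 0 := fun t => by linarith [hconst t 0]
  exact ⟨R 0, hRpos 0, hR₀, fun t => by rw [hsync₁, hR₀]⟩
end

section
/- Let R : ℝ → ℝ be differentiable with R(t) > 0 for all t ∈ ℝ, and suppose R satisfies the functional equation R(t) = R(t − 2·R(t)) for all t ∈ ℝ. Then R is constant. -/
/-!
Write `g t = t - c R t`, so that `R ∘ g = R`. Differentiating gives
`R' t = R' (g t) (1 - c R' t)`, so `c R'` never takes the value `1`; since `R'` vanishes
somewhere (Rolle on `[g t, t]`), Darboux's theorem forces `c R' < 1`, i.e. `g` is strictly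
increasing. Comparing `g^[n] u = u - n c R u` with `g^[n] v` for large `n` shows that `R` is
antitone, and then `R v = R (v - n c R v) ≥ R u` for `u < v` and `n` large makes it constant.
-/

namespace FunctionalEquation

variable {R : ℝ → ℝ} {c : ℝ}

theorem apply_sub_nat_mul_eq (hfe : ∀ t, R (t - c * R t) = R t) (n : ℕ) (t : ℝ) :
    R (t - n * (c * R t)) = R t := by
  induction n with
  | zero => simp
  | succ n ih =>
    calc R (t - (n + 1 : ℕ) * (c * R t))
        = R ((t - n * (c * R t)) - c * R (t - n * (c * R t))) := by
          rw [ih]; push_cast; ring_nf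
      _ = R t := by rw [hfe, ih]

theorem iterate_sub_mul_apply (hfe : ∀ t, R (t - c * R t) = R t) (n : ℕ) (t : ℝ) :
    (fun s => s - c * R s)^[n] t = t - n * (c * R t) := by
  induction n with
  | zero => simp
  | succ n ih =>
    rw [Function.iterate_succ_apply', ih, apply_sub_nat_mul_eq hfe]
    push_cast
    ring

theorem mul_deriv_ne_one (hR : Differentiable ℝ R) (hfe : ∀ t, R (t - c * R t) = R t)
    (t : ℝ) : c * deriv R t ≠ 1 := by
  intro ht
  have hshift : HasDerivAt (fun s => s - c * R s) (1 - c * deriv R t) t :=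
    (hasDerivAt_id t).sub ((hR t).hasDerivAt.const_mul c)
  have hchain : HasDerivAt R (deriv R (t - c * R t) * (1 - c * deriv R t)) t := by
    simpa only [Function.comp_def, hfe] using (hR _).hasDerivAt.comp t hshift
  have hzero := (hR t).hasDerivAt.unique hchain
  rw [ht, sub_self, mul_zero] at hzero
  simp [hzero] at ht

theorem exists_deriv_eq_zero_of_apply_sub_mul_eq (hR : Differentiable ℝ R) (hc : 0 < c)
    (hRpos : ∀ t, 0 < R t) (hfe : ∀ t, R (t - c * R t) = R t) : ∃ x, deriv R x = 0 := by
  obtain ⟨x, -, hx⟩ := exists_deriv_eq_zero (a := 0 - c * R 0) (b := 0)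
    (by linarith [mul_pos hc (hRpos 0)]) hR.continuous.continuousOn (hfe 0)
  exact ⟨x, hx⟩

theorem mul_deriv_lt_one (hR : Differentiable ℝ R) (hc : 0 < c) (hRpos : ∀ t, 0 < R t)
    (hfe : ∀ t, R (t - c * R t) = R t) (t : ℝ) : c * deriv R t < 1 := by
  have hDarboux := hasDerivWithinAt_forall_lt_or_forall_gt_of_forall_ne convex_univ
    (fun x _ => ((hR x).hasDerivAt.const_mul c).hasDerivWithinAt)
    (fun x _ => mul_deriv_ne_one hR hfe x)
  obtain ⟨x, hx⟩ := exists_deriv_eq_zero_of_apply_sub_mul_eq hR hc hRpos hfe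
  rcases hDarboux with hlt | hgt
  · exact hlt t trivial
  · have := hgt x trivial
    rw [hx, mul_zero] at this
    linarith

theorem strictMono_sub_mul (hR : Differentiable ℝ R) (hc : 0 < c) (hRpos : ∀ t, 0 < R t)
    (hfe : ∀ t, R (t - c * R t) = R t) : StrictMono fun s => s - c * R s :=
  strictMono_of_hasDerivAt_pos (fun t => (hasDerivAt_id t).sub ((hR t).hasDerivAt.const_mul c))
    fun t => sub_pos.2 (mul_deriv_lt_one hR hc hRpos hfe t)

theorem antitone_of_strictMono_sub_mul (hc : 0 < c) (hfe : ∀ t, R (t - c * R t) = R t)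
    (hmono : StrictMono fun s => s - c * R s) : Antitone R := by
  refine antitone_iff_forall_lt.2 fun u v huv => not_lt.1 fun hRuv => ?_
  obtain ⟨n, hn⟩ := exists_lt_nsmul (mul_pos hc (sub_pos.2 hRuv)) (v - u)
  have hiter := (hmono.iterate n) huv
  rw [iterate_sub_mul_apply hfe, iterate_sub_mul_apply hfe] at hiter
  rw [nsmul_eq_mul] at hn
  linarith

theorem apply_eq_apply_of_antitone (hc : 0 < c) (hRpos : ∀ t, 0 < R t)
    (hfe : ∀ t, R (t - c * R t) = R t) (hanti : Antitone R) (u v : ℝ) : R u = R v := by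
  wlog huv : u ≤ v generalizing u v
  · exact (this v u (le_of_not_ge huv)).symm
  obtain ⟨n, hn⟩ := exists_lt_nsmul (mul_pos hc (hRpos v)) (v - u)
  rw [nsmul_eq_mul] at hn
  have hle : R u ≤ R (v - n * (c * R v)) := hanti (by linarith)
  rw [apply_sub_nat_mul_eq hfe] at hle
  exact le_antisymm hle (hanti huv)

end FunctionalEquation

/-- The analytic core of Proposition 3 of the paper: a positive differentiable
function `R` satisfying the functional equation `R(t) = R(t - 2 R(t))` for all
`t ∈ ℝ` is constant. -/
theorem functional_equation_implies_constant
    (R : ℝ → ℝ) (hR : Differentiable ℝ R)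
    (hRpos : ∀ t : ℝ, R t > 0)
    (hfe : ∀ t : ℝ, R t = R (t - 2 * R t)) :
    ∃ c : ℝ, ∀ t : ℝ, R t = c := by
  have hfe' : ∀ t, R (t - 2 * R t) = R t := fun t => (hfe t).symm
  have hanti : Antitone R :=
    FunctionalEquation.antitone_of_strictMono_sub_mul two_pos hfe'
      (FunctionalEquation.strictMono_sub_mul hR two_pos hRpos hfe')
  exact ⟨R 0, fun t =>
    FunctionalEquation.apply_eq_apply_of_antitone two_pos hRpos hfe' hanti t 0⟩
end

section
/- Let R : ℝ → ℝ be differentiable with R(t) > 0 for all t ∈ ℝ, satisfying R(t) = R(t − 2·R(t)) for all t ∈ ℝ. Then R'(t) ≥ 0 for every t ∈ ℝ. -/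
/-!
Differentiating `R = R ∘ g` with `g t = t - 2 R t` gives `R' t = R' (g t) (1 - 2 R' t)`, so `R'`
never takes the value `1/2`. By Darboux, a point with `R' < 0` forces `R' < 1/2` everywhere, so
`g` is increasing. Iterating, `g^[n] t = t - 2 n R t`, and `g^[n] s ≤ g^[n] t` for `s ≤ t` and all
`n` forces `R t ≤ R s`: `R` is antitone. But an antitone `R` with `R (t - 2 R t) = R t` is constant
on `[t - 2 R t, t]`, so its derivative at `t` vanishes.
-/

open Topology

namespace RadarEquation

variable {f : ℝ → ℝ} {c : ℝ}

theorem apply_sub_nat_mul_eq (hfe : ∀ t, f (t - c * f t) = f t) (n : ℕ) (t : ℝ) :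
    f (t - n * c * f t) = f t := by
  induction n with
  | zero => simp
  | succ n ih =>
    calc f (t - (n + 1 : ℕ) * c * f t)
        = f (t - n * c * f t - c * f (t - n * c * f t)) := by rw [ih]; push_cast; ring_nf
      _ = f t := by rw [hfe, ih]

theorem antitone_of_monotone_sub_mul (hc : 0 < c) (hfe : ∀ t, f (t - c * f t) = f t)
    (hmono : Monotone fun t => t - c * f t) : Antitone f := by
  intro s t hst
  have hiter : ∀ n : ℕ, s - n * c * f s ≤ t - n * c * f t := by
    intro n
    induction n with
    | zero => simpa using hst
    | succ n ih =>
      have h := hmono ih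
      simp only [apply_sub_nat_mul_eq hfe] at h
      push_cast
      linarith
  by_contra! hlt
  obtain ⟨n, hn⟩ := exists_nat_gt ((t - s) / (c * (f t - f s)))
  rw [div_lt_iff₀ (mul_pos hc (sub_pos.mpr hlt))] at hn
  nlinarith [hiter n]

theorem deriv_eq_zero_of_antitone (hc : 0 < c) {t : ℝ} (hfe : f (t - c * f t) = f t)
    (hanti : Antitone f) (hpos : 0 < f t) (hdiff : DifferentiableAt ℝ f t) : deriv f t = 0 := by
  have hconst : f =ᶠ[𝓝[≤] t] fun _ => f t := by
    filter_upwards [Icc_mem_nhdsLE (by nlinarith : t - c * f t < t)] with x hx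
    exact le_antisymm (hfe ▸ hanti hx.1) (hanti hx.2)
  exact (uniqueDiffWithinAt_Iic t).eq_deriv _ hdiff.hasDerivAt.hasDerivWithinAt
    ((hasDerivWithinAt_const t _ (f t)).congr_of_eventuallyEq hconst rfl)

theorem hasDerivAt_sub_mul {t : ℝ} (hdiff : DifferentiableAt ℝ f t) :
    HasDerivAt (fun s => s - c * f s) (1 - c * deriv f t) t :=
  (hasDerivAt_id t).sub (hdiff.hasDerivAt.const_mul c)

theorem deriv_eq_deriv_sub_mul_mul (hf : Differentiable ℝ f)
    (hfe : ∀ t, f (t - c * f t) = f t) (t : ℝ) :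
    deriv f t = deriv f (t - c * f t) * (1 - c * deriv f t) := by
  have hcomp := (hf (t - c * f t)).hasDerivAt.comp t (hasDerivAt_sub_mul (c := c) (hf t))
  rw [show (f ∘ fun s => s - c * f s) = f from funext hfe] at hcomp
  exact hcomp.deriv

theorem deriv_ne_inv (hc : c ≠ 0) (hf : Differentiable ℝ f)
    (hfe : ∀ t, f (t - c * f t) = f t) (t : ℝ) : deriv f t ≠ c⁻¹ := by
  intro h
  have := deriv_eq_deriv_sub_mul_mul hf hfe t
  rw [h, mul_inv_cancel₀ hc, sub_self, mul_zero] at this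
  exact inv_ne_zero hc this

theorem deriv_lt_inv (hc : c ≠ 0) (hf : Differentiable ℝ f)
    (hfe : ∀ t, f (t - c * f t) = f t) {t₀ : ℝ} (ht₀ : deriv f t₀ < c⁻¹) (t : ℝ) :
    deriv f t < c⁻¹ := by
  rcases hasDerivWithinAt_forall_lt_or_forall_gt_of_forall_ne convex_univ
      (fun x _ => (hf x).hasDerivAt.hasDerivWithinAt) (fun x _ => deriv_ne_inv hc hf hfe x)
    with hlt | hgt
  · exact hlt t trivial
  · exact absurd (hgt t₀ trivial) ht₀.not_gt

theorem monotone_sub_mul (hc : 0 < c) (hf : Differentiable ℝ f) (hlt : ∀ t, deriv f t < c⁻¹) :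
    Monotone fun t => t - c * f t := by
  refine monotone_of_deriv_nonneg (differentiable_id.sub (hf.const_mul c)) fun t => ?_
  rw [(hasDerivAt_sub_mul (hf t)).deriv, sub_nonneg]
  simpa [mul_inv_cancel₀ hc.ne'] using mul_le_mul_of_nonneg_left (hlt t).le hc.le

end RadarEquation

/-- Intermediate step in the proof of Proposition 3 of the paper: a positive
differentiable solution of `R(t) = R(t - 2 R(t))` can have no point of
negative derivative. -/
theorem deriv_nonneg_of_functional_equation
    (R : ℝ → ℝ) (hR : Differentiable ℝ R)
    (hRpos : ∀ t : ℝ, R t > 0)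
    (hfe : ∀ t : ℝ, R t = R (t - 2 * R t)) :
    ∀ t : ℝ, deriv R t ≥ 0 := by
  intro t₀
  by_contra! hneg
  have hfe' : ∀ t, R (t - 2 * R t) = R t := fun t => (hfe t).symm
  have hlt := RadarEquation.deriv_lt_inv two_ne_zero hR hfe' (t₀ := t₀) (by linarith)
  have hanti := RadarEquation.antitone_of_monotone_sub_mul two_pos hfe'
    (RadarEquation.monotone_sub_mul two_pos hR hlt)
  have := RadarEquation.deriv_eq_zero_of_antitone two_pos (hfe' t₀) hanti (hRpos t₀) (hR t₀)
  linarith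
end

section
/- Let R : ℝ → ℝ be differentiable with R(t) > 0 and R'(t) ≥ 0 for all t ∈ ℝ, and suppose R(t) = R(t − 2·R(t)) for all t ∈ ℝ. Then R is constant. -/
/-!
Iterating the equation gives `R (t - 2 n R(t)) = R t` for every `n : ℕ`. Since `R(t) > 0`, these
points reach below any `s ≤ t`, so monotonicity squeezes `R s` between `R t` and `R t`.
-/

theorem apply_sub_nat_mul_eq_of_apply_sub_eq {β : Type*} {f : ℝ → β} {δ : β → ℝ}
    (hf : ∀ t, f (t - δ (f t)) = f t) (t : ℝ) (n : ℕ) :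
    f (t - n * δ (f t)) = f t := by
  induction n with
  | zero => simp
  | succ n ih =>
    calc f (t - (n + 1 : ℕ) * δ (f t))
        = f (t - n * δ (f t) - δ (f (t - n * δ (f t)))) := by rw [ih]; push_cast; ring_nf
      _ = f t := by rw [hf, ih]

theorem Monotone.apply_eq_of_le_of_apply_sub_nat_mul_eq {α : Type*} [PartialOrder α]
    {f : ℝ → α} (hf : Monotone f) {t p : ℝ} (hp : 0 < p)
    (hper : ∀ n : ℕ, f (t - n * p) = f t) {s : ℝ} (hst : s ≤ t) : f s = f t := by
  obtain ⟨n, hn⟩ := exists_nat_ge ((t - s) / p)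
  have hreach : t - n * p ≤ s := by
    rw [div_le_iff₀ hp] at hn
    linarith
  refine le_antisymm (hf hst) ?_
  calc f t = f (t - n * p) := (hper n).symm
    _ ≤ f s := hf hreach

theorem Monotone.eq_const_of_apply_sub_eq {α : Type*} [PartialOrder α] {f : ℝ → α}
    {δ : α → ℝ} (hf : Monotone f) (hδ : ∀ t, 0 < δ (f t))
    (hfe : ∀ t, f (t - δ (f t)) = f t) (t : ℝ) : f t = f 0 := by
  have hper := apply_sub_nat_mul_eq_of_apply_sub_eq hfe
  rcases le_total t 0 with ht | ht
  · exact hf.apply_eq_of_le_of_apply_sub_nat_mul_eq (hδ 0) (hper 0) ht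
  · exact (hf.apply_eq_of_le_of_apply_sub_nat_mul_eq (hδ t) (hper t) ht).symm

/-- Concluding step in the proof of Proposition 3 of the paper: a positive,
nondecreasing (in the sense `R' ≥ 0`) differentiable solution of
`R(t) = R(t - 2 R(t))` is constant. -/
theorem constant_of_nonneg_deriv_functional_equation
    (R : ℝ → ℝ) (hR : Differentiable ℝ R)
    (hRpos : ∀ t : ℝ, R t > 0)
    (hderiv : ∀ t : ℝ, deriv R t ≥ 0)
    (hfe : ∀ t : ℝ, R t = R (t - 2 * R t)) :
    ∃ c : ℝ, ∀ t : ℝ, R t = c := by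
  have hmono : Monotone R := monotone_of_deriv_nonneg hR hderiv
  exact ⟨R 0, hmono.eq_const_of_apply_sub_eq (δ := (2 * ·))
    (fun t => mul_pos two_pos (hRpos t)) (fun t => (hfe t).symm)⟩
end

section
/- Model Minkowski spacetime as ℝ⁴ with quadratic form Q(v) = −v₀² + v₁² + v₂² + v₃². Let R₀ > 0 and ω ∈ ℝ with ω²R₀² < 1, set a = √(1 − ω²R₀²), and consider the clocks γ(t) = (t, 0, 0, 0) and γ̃(t̃) = (a·t̃, R₀·cos(ω t̃), R₀·sin(ω t̃), 0). Then for every t ∈ ℝ, the set {t̃ ∈ ℝ : Q(γ̃(t̃) − γ(t)) = 0} equals {(t − R₀)/a, (t + R₀)/a}. Consequently, the radar method carried through with respect to γ̃ assigns to the event γ(t) the radar time T̃(t) = t/√(1 − ω²R₀²) and the radar distance R̃(t) = R₀/√(1 − ω²R₀²); in particular neither clock is Einstein synchroneous to the other, and they assign to each other constant but different radar distances. -/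
noncomputable def minkQ (v : Fin 4 → ℝ) : ℝ :=
  -(v 0) ^ 2 + (v 1) ^ 2 + (v 2) ^ 2 + (v 3) ^ 2

/-!
The circling clock stays on the cylinder of radius `R₀` about the worldline of the rest clock,
so the Minkowski interval from `γ(t)` to `γ̃(t̃)` is `R₀² - (a t̃ - t)²`. It vanishes exactly
when `a t̃ = t ∓ R₀`, and averaging resp. halving the difference of these two parameters gives
the radar time `t / a` and the radar distance `R₀ / a`. Since `0 < a < 1` neither clock is
synchroneous to the other, and `R₀ / a ≠ R₀`.
-/

open Real

theorem minkQ_circling_sub_rest (R ω a tt t : ℝ) :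
    minkQ (![a * tt, R * cos (ω * tt), R * sin (ω * tt), 0] - ![t, 0, 0, 0]) =
      R ^ 2 - (a * tt - t) ^ 2 := by
  simp only [minkQ, Pi.sub_apply, Matrix.cons_val_zero, Matrix.cons_val_one, Matrix.cons_val_two,
    Matrix.cons_val_three, Matrix.head_cons, Matrix.tail_cons]
  linear_combination R ^ 2 * sin_sq_add_cos_sq (ω * tt)

theorem setOf_sq_sub_sq_affine_eq_zero {a : ℝ} (ha : a ≠ 0) (t R : ℝ) :
    {x : ℝ | R ^ 2 - (a * x - t) ^ 2 = 0} = {(t - R) / a, (t + R) / a} := by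
  ext x
  simp only [Set.mem_ofPred_eq, Set.mem_insert_iff, Set.mem_singleton_iff, sub_eq_zero,
    eq_comm (a := R ^ 2), sq_eq_sq_iff_eq_or_eq_neg, eq_div_iff ha]
  constructor <;> rintro (h | h) <;> [right; left; right; left] <;> linarith [mul_comm x a]

theorem sqrt_one_sub_mul_lt_one {ω R : ℝ} (hω : ω ≠ 0) (hR : R ≠ 0) :
    √(1 - ω ^ 2 * R ^ 2) < 1 := by
  rw [sqrt_lt' one_pos, one_pow, sub_lt_self_iff]
  positivity

/-- Section 5 example of the paper, radar method carried through with respect to the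
circling clock `γ̃(t̃) = (a t̃, R₀ cos ω t̃, R₀ sin ω t̃, 0)`, `a = √(1-ω²R₀²)`: the
two light rays through the event `γ(t) = (t,0,0,0)` meet `γ̃` at parameters
`(t ∓ R₀)/a`; hence `γ̃` assigns to `γ(t)` radar time `T̃(t) = t/√(1-ω²R₀²)` and
radar distance `R̃(t) = R₀/√(1-ω²R₀²)`; in particular neither clock is Einstein
synchroneous to the other and they assign to each other constant but different
distances. -/
theorem radar_of_rest_clock_wrt_circling_clock
    (R₀ ω : ℝ) (hR₀ : R₀ > 0) (hω : ω ^ 2 * R₀ ^ 2 < 1) (hω0 : ω ≠ 0)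
    (a : ℝ) (ha : a = Real.sqrt (1 - ω ^ 2 * R₀ ^ 2))
    (γ γt : ℝ → Fin 4 → ℝ)
    (hγ : ∀ t : ℝ, γ t = ![t, 0, 0, 0])
    (hγt : ∀ tt : ℝ, γt tt = ![a * tt, R₀ * Real.cos (ω * tt), R₀ * Real.sin (ω * tt), 0]) :
    (∀ t : ℝ,
      {tt : ℝ | minkQ (γt tt - γ t) = 0} = {(t - R₀) / a, (t + R₀) / a} ∧
      ((t - R₀) / a + (t + R₀) / a) / 2 = t / Real.sqrt (1 - ω ^ 2 * R₀ ^ 2) ∧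
      ((t + R₀) / a - (t - R₀) / a) / 2 = R₀ / Real.sqrt (1 - ω ^ 2 * R₀ ^ 2)) ∧
    -- γ is not Einstein synchroneous to γ̃ …
    (∃ t : ℝ, ((t - R₀) / a + (t + R₀) / a) / 2 ≠ t) ∧
    -- … and γ̃ is not Einstein synchroneous to γ …
    (∃ tt : ℝ, ((a * tt - R₀) + (a * tt + R₀)) / 2 ≠ tt) ∧
    -- … and the two constant radar distances differ.
    R₀ / Real.sqrt (1 - ω ^ 2 * R₀ ^ 2) ≠ R₀ := by
  have ha_pos : 0 < a := ha ▸ sqrt_pos.2 (by linarith)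
  have ha_lt_one : a < 1 := ha ▸ sqrt_one_sub_mul_lt_one hω0 hR₀.ne'
  rw [← ha]
  refine ⟨fun t => ⟨?_, by ring, by ring⟩, ⟨1, ?_⟩, ⟨1, ?_⟩, ?_⟩
  · simp only [hγ, hγt, minkQ_circling_sub_rest]
    exact setOf_sq_sub_sq_affine_eq_zero ha_pos.ne' t R₀
  · rw [show ((1 - R₀) / a + (1 + R₀) / a) / 2 = a⁻¹ by ring]
    exact inv_ne_one.2 ha_lt_one.ne
  · rw [show (a * 1 - R₀ + (a * 1 + R₀)) / 2 = a by ring]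
    exact ha_lt_one.ne
  · rw [Ne, div_eq_iff ha_pos.ne']
    exact (mul_lt_of_lt_one_right hR₀ ha_lt_one).ne'
end

section
/- Model Minkowski spacetime as ℝ⁴ with quadratic form Q(v) = −v₀² + v₁² + v₂² + v₃². Let R₀ > 0 and ω ∈ ℝ with ω²R₀² < 1, set a = √(1 − ω²R₀²), and consider the clocks γ(t) = (t, 0, 0, 0) and γ̂(t̂) = (t̂, R₀·cos(ω t̂/a), R₀·sin(ω t̂/a), 0). Then for every t̂ ∈ ℝ the set {t ∈ ℝ : Q(γ(t) − γ̂(t̂)) = 0} equals {t̂ − R₀, t̂ + R₀}, and for every t ∈ ℝ the set {t̂ ∈ ℝ : Q(γ̂(t̂) − γ(t)) = 0} equals {t − R₀, t + R₀}. Consequently each clock is Einstein synchroneous to the other and each assigns to the other the same constant radar distance R₀. -/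
theorem minkQ_neg (v : Fin 4 → ℝ) : minkQ (-v) = minkQ v := by
  simp only [minkQ, Pi.neg_apply, neg_sq]

theorem minkQ_rest_sub (t : ℝ) (q : Fin 4 → ℝ) :
    minkQ (![t, 0, 0, 0] - q) = (q 1 ^ 2 + q 2 ^ 2 + q 3 ^ 2) - (t - q 0) ^ 2 := by
  simp only [minkQ, Pi.sub_apply, Matrix.cons_val_zero, Matrix.cons_val_one,
    Matrix.cons_val_two, Matrix.cons_val_three, Matrix.head_cons, Matrix.tail_cons]
  ring

theorem setOf_sq_sub_eq_sq (u r : ℝ) : {x : ℝ | (x - u) ^ 2 = r ^ 2} = {u - r, u + r} := by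
  ext x
  rw [Set.mem_ofPred_eq, sq_eq_sq_iff_eq_or_eq_neg, sub_eq_iff_eq_add', sub_eq_iff_eq_add',
    ← sub_eq_add_neg, or_comm]
  rfl

theorem mutually_synchroneous_clocks_example_general
    (R₀ ω : ℝ)
    (a : ℝ)
    (γ γh : ℝ → Fin 4 → ℝ)
    (hγ : ∀ t : ℝ, γ t = ![t, 0, 0, 0])
    (hγh : ∀ th : ℝ, γh th =
      ![th, R₀ * Real.cos (ω * th / a), R₀ * Real.sin (ω * th / a), 0]) :
    (∀ th : ℝ,
      {t : ℝ | minkQ (γ t - γh th) = 0} = {th - R₀, th + R₀} ∧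
      ((th - R₀) + (th + R₀)) / 2 = th ∧
      ((th + R₀) - (th - R₀)) / 2 = R₀) ∧
    (∀ t : ℝ,
      {th : ℝ | minkQ (γh th - γ t) = 0} = {t - R₀, t + R₀} ∧
      ((t - R₀) + (t + R₀)) / 2 = t ∧
      ((t + R₀) - (t - R₀)) / 2 = R₀) := by
  have hnull : ∀ t th, minkQ (γ t - γh th) = R₀ ^ 2 - (t - th) ^ 2 := by
    intro t th
    rw [hγ, hγh, minkQ_rest_sub]
    simp only [Matrix.cons_val_zero, Matrix.cons_val_one, Matrix.cons_val_two,
      Matrix.cons_val_three, Matrix.head_cons, Matrix.tail_cons]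
    rw [mul_pow, mul_pow, ← mul_add, Real.cos_sq_add_sin_sq]
    ring
  refine ⟨fun th => ⟨?_, by ring, by ring⟩, fun t => ⟨?_, by ring, by ring⟩⟩
  · simpa only [hnull, sub_eq_zero, eq_comm] using setOf_sq_sub_eq_sq th R₀
  · simpa only [← neg_sub (γ t), minkQ_neg, hnull, sub_eq_zero, eq_comm, sub_sq_comm t]
      using setOf_sq_sub_eq_sq t R₀

/-- Section 5 example of the paper (equation (20)): for the rest clock
`γ(t) = (t,0,0,0)` and the reparametrized circling clock
`γ̂(t̂) = (t̂, R₀ cos(ω t̂/a), R₀ sin(ω t̂/a), 0)` with `a = √(1-ω²R₀²)`, the light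
rays connecting the two worldlines meet at parameters `t̂ ∓ R₀` resp. `t ∓ R₀`;
consequently each clock is Einstein synchroneous to the other and each assigns to
the other the same constant radar distance `R₀`. -/
theorem mutually_synchroneous_clocks_example
    (R₀ ω : ℝ) (hR₀ : R₀ > 0) (hω : ω ^ 2 * R₀ ^ 2 < 1)
    (a : ℝ) (ha : a = Real.sqrt (1 - ω ^ 2 * R₀ ^ 2))
    (γ γh : ℝ → Fin 4 → ℝ)
    (hγ : ∀ t : ℝ, γ t = ![t, 0, 0, 0])
    (hγh : ∀ th : ℝ, γh th =
      ![th, R₀ * Real.cos (ω * th / a), R₀ * Real.sin (ω * th / a), 0]) :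
    (∀ th : ℝ,
      {t : ℝ | minkQ (γ t - γh th) = 0} = {th - R₀, th + R₀} ∧
      ((th - R₀) + (th + R₀)) / 2 = th ∧
      ((th + R₀) - (th - R₀)) / 2 = R₀) ∧
    (∀ t : ℝ,
      {th : ℝ | minkQ (γh th - γ t) = 0} = {t - R₀, t + R₀} ∧
      ((t - R₀) + (t + R₀)) / 2 = t ∧
      ((t + R₀) - (t - R₀)) / 2 = R₀) :=
  mutually_synchroneous_clocks_example_general R₀ ω a γ γh hγ hγh
end

section
/- Model two-dimensional Minkowski spacetime as ℝ² with quadratic form Q(v) = −v₀² + v₁², and let γ(t) = (sinh t, cosh t) be the uniformly accelerated (Rindler) clock. Then for every q ∈ ℝ² not lying on the image of γ: (i) there exists t ∈ ℝ with Q(γ(t) − q) = 0 and (γ(t) − q)₀ > 0 (a future-pointing light ray from q to γ) if and only if q₀ < q₁; and (ii) there exists t ∈ ℝ with Q(γ(t) − q) = 0 and (γ(t) − q)₀ < 0 (a past-pointing light ray from q to γ, i.e., a light ray from γ to q) if and only if q₀ > −q₁. In particular, events with q₀ ≥ q₁ cannot be connected to γ by any future-pointing light ray and events with q₀ ≤ −q₁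 cannot be connected to γ by any past-pointing light ray: the lines q₀ = q₁ and q₀ = −q₁ are event horizons for γ. -/
/-!
In light-cone coordinates `u = v₁ - v₀`, `w = v₁ + v₀` the form is `Q(v) = u w`, the clock is
the hyperbola `(u, w) = (e^{-t}, e^t)`, and `2 v₀ = w - u`. A light ray from `q` reaches the
clock along one of the two null lines through `q`, i.e. where `e^{-t} = u(q)` or `e^t = w(q)`.
The first line meets the clock iff `u(q) > 0`, and the meeting point lies to the future of `q`
iff `u(q) w(q) < 1`; along the second line this happens iff `u(q) w(q) > 1`, which again forces
`u(q) > 0`. Off the clock `u(q) w(q) ≠ 1` when `u(q) > 0`, so a future-pointing ray exists iff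
`u(q) > 0`. Reversing time (`t ↦ -t`) swaps `u` and `w` and gives the past-pointing case.
-/

open Real

/-- The Minkowski quadratic form on two-dimensional Minkowski spacetime `ℝ²`. -/
noncomputable def minkQ2 (v : Fin 2 → ℝ) : ℝ := -(v 0) ^ 2 + (v 1) ^ 2

lemma minkQ2_eq_mul (v : Fin 2 → ℝ) : minkQ2 v = (v 1 - v 0) * (v 1 + v 0) := by
  unfold minkQ2
  ring

lemma exists_exp_null_future_iff {u w : ℝ} (hoff : ∀ t, exp (-t) = u → exp t ≠ w) :
    (∃ t, (exp (-t) - u) * (exp t - w) = 0 ∧ exp (-t) - u < exp t - w) ↔ 0 < u := by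
  constructor
  · rintro ⟨t, hnull, hlt⟩
    rcases mul_eq_zero.mp hnull with hu | hw <;> linarith [exp_pos (-t)]
  · intro hu
    have hexp_neg_log : exp (-log u) = u⁻¹ := by rw [exp_neg, exp_log hu]
    rcases lt_trichotomy w u⁻¹ with hlt | heq | hgt
    · refine ⟨-log u, ?_, ?_⟩ <;> rw [neg_neg, exp_log hu, hexp_neg_log]
      · ring
      · linarith
    · exact (hoff (-log u) (by rw [neg_neg, exp_log hu]) (hexp_neg_log.trans heq.symm)).elim
    · have hw : 0 < w := (inv_pos.mpr hu).trans hgt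
      refine ⟨log w, ?_, ?_⟩ <;> rw [exp_log hw]
      · ring
      · rw [exp_neg, exp_log hw]
        linarith [inv_lt_of_inv_lt₀ hu hgt]

lemma exists_exp_null_past_iff {u w : ℝ} (hoff : ∀ t, exp (-t) = u → exp t ≠ w) :
    (∃ t, (exp (-t) - u) * (exp t - w) = 0 ∧ exp t - w < exp (-t) - u) ↔ 0 < w := by
  have hoff' : ∀ t, exp (-t) = w → exp t ≠ u := fun t hw hu =>
    hoff (-t) (by rwa [neg_neg]) hw
  rw [← exists_exp_null_future_iff hoff', neg_surjective.exists]
  simp only [neg_neg, mul_comm]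

/-- Horizons of the uniformly accelerated (Rindler) clock
`γ(t) = (sinh t, cosh t)` in two-dimensional Minkowski spacetime (Figure 2, right,
of the paper): an event `q` off the worldline can be connected to `γ` by a
future-pointing light ray iff `q₀ < q₁`, and by a past-pointing light ray (a light
ray from `γ` to `q`) iff `q₀ > -q₁`; the null lines `q₀ = ±q₁` are event horizons. -/
theorem rindler_horizons
    (γ : ℝ → Fin 2 → ℝ)
    (hγ : ∀ t : ℝ, γ t = ![Real.sinh t, Real.cosh t])
    (q : Fin 2 → ℝ) (hq : q ∉ Set.range γ) :
    ((∃ t : ℝ, minkQ2 (γ t - q) = 0 ∧ (γ t - q) 0 > 0) ↔ q 0 < q 1) ∧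
    ((∃ t : ℝ, minkQ2 (γ t - q) = 0 ∧ (γ t - q) 0 < 0) ↔ q 0 > -(q 1)) := by
  have hminus (t : ℝ) : (γ t - q) 1 - (γ t - q) 0 = exp (-t) - (q 1 - q 0) := by
    rw [← cosh_sub_sinh]
    simp only [hγ, Pi.sub_apply, Matrix.cons_val_zero, Matrix.cons_val_one, Matrix.cons_val_fin_one]
    ring
  have hplus (t : ℝ) : (γ t - q) 1 + (γ t - q) 0 = exp t - (q 1 + q 0) := by
    rw [← cosh_add_sinh]
    simp only [hγ, Pi.sub_apply, Matrix.cons_val_zero, Matrix.cons_val_one, Matrix.cons_val_fin_one]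
    ring
  have hnull (t : ℝ) : minkQ2 (γ t - q) = (exp (-t) - (q 1 - q 0)) * (exp t - (q 1 + q 0)) := by
    rw [minkQ2_eq_mul, hminus, hplus]
  have hoff (t : ℝ) (hu : exp (-t) = q 1 - q 0) : exp t ≠ q 1 + q 0 := fun hw =>
    hq ⟨t, by
      ext i; fin_cases i <;> simp [hγ, sinh_eq, cosh_eq, hu, hw]⟩
  have hfuture (t : ℝ) : (γ t - q) 0 > 0 ↔ exp (-t) - (q 1 - q 0) < exp t - (q 1 + q 0) := by
    rw [← hminus, ← hplus]; constructor <;> intro <;> linarith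
  have hpast (t : ℝ) : (γ t - q) 0 < 0 ↔ exp t - (q 1 + q 0) < exp (-t) - (q 1 - q 0) := by
    rw [← hminus, ← hplus]; constructor <;> intro <;> linarith
  simp only [hnull, hfuture, hpast, exists_exp_null_future_iff hoff, exists_exp_null_past_iff hoff]
  constructor <;> constructor <;> intro <;> linarith
end
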